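/- Let H be an infinite-dimensional complex separable Hilbert space with a fixed orthonormal basis {e_n}_{n∈ℕ}, associated canonical conjugation J, and canonical shift S_H (S_H e_n = e_{n+1}). Let C be a conjugation on H, let {f_n}_{n∈ℕ} be an orthonormal basis of H, let S be the unilateral shift corresponding to {f_n} (S f_n = f_{n+1}), and let U be the unitary operator determined by U e_n = f_n for all n. Then C ∘ S_H = S ∘ C if and only if there exists λ ∈ ℂ with |λ| = 1 such that C = λ · (U ∘ J), i.e., C x = λ · U(J x) for all x ∈ H. -/

import Mathlib

noncomputable section
open scoped ComplexConjugate
open ContinuousLinearMap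

/-- A conjugation on a complex Hilbert space: an antilinear, involutive, isometric map. -/
def IsConjugation {E : Type*} [NormedAddCommGroup E] [InnerProductSpace ℂ E] (C : E → E) : Prop :=
  (∀ (a : ℂ) (f g : E), C (a • f + g) = conj a • C f + C g) ∧
  (∀ f, C (C f) = f) ∧
  (∀ f, ‖C f‖ = ‖f‖)

/-! The operator `V = U⁻¹ C J` is unitary, being a product of two conjugations and a unitary, and
`C` intertwines the shifts exactly when `V` commutes with `S_H`. A unitary commuting with `S_H`
commutes with its inverse as well, so `V e₀` is orthogonal to `V (S_H H) = S_H H`, i.e. to every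
`e (n + 1)`; hence `V e₀ = λ e₀`, and then `V e_n = V S_Hⁿ e₀ = λ e_n` for all `n`, so `V = λ`. -/

namespace HilbertBasis

variable {𝕜 E F : Type*} [RCLike 𝕜] [NormedAddCommGroup E] [InnerProductSpace 𝕜 E]
  [NormedAddCommGroup F] [NormedSpace 𝕜 F]

lemma ext_continuousLinearMap {ι : Type*} {σ : 𝕜 →+* 𝕜} (e : HilbertBasis ι 𝕜 E)
    {f g : E →SL[σ] F} (h : ∀ i, f (e i) = g (e i)) : f = g :=
  ContinuousLinearMap.ext_on (Submodule.dense_iff_topologicalClosure_eq_top.mpr e.dense_span)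
    (by rintro _ ⟨i, rfl⟩; exact h i)

variable (e : HilbertBasis ℕ 𝕜 E)

lemma eq_inner_smul_zero_of_inner_succ {x : E} (hx : ∀ n, inner 𝕜 (e (n + 1)) x = 0) :
    x = inner 𝕜 (e 0) x • e 0 := by
  refine e.repr.injective (lp.ext (funext fun n => ?_))
  rw [e.repr_apply_apply, e.repr_apply_apply, inner_smul_right]
  cases n with
  | zero => simp [e.orthonormal.1 0]
  | succ n => simp [hx, e.orthonormal.inner_eq_zero (Nat.succ_ne_zero n)]

lemma inner_zero_apply_eq_zero_of_shift {T : E →L[𝕜] E} (hT : ∀ n, T (e n) = e (n + 1)) (x : E) :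
    inner 𝕜 (e 0) (T x) = 0 := by
  suffices (innerSL 𝕜 (e 0)).comp T = 0 from congrArg (· x) this
  refine e.ext_continuousLinearMap fun n => ?_
  simp [hT, e.orthonormal.inner_eq_zero (Nat.succ_ne_zero n).symm]

lemma exists_eq_smul_of_commute_shift {T : E →L[𝕜] E} (hT : ∀ n, T (e n) = e (n + 1))
    (V : E ≃ₗᵢ[𝕜] E) (hV : ∀ x, V (T x) = T (V x)) : ∃ c : 𝕜, ‖c‖ = 1 ∧ ∀ x, V x = c • x := by
  have hV_symm (x : E) : V.symm (T x) = T (V.symm x) := by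
    rw [V.symm_apply_eq, hV, V.apply_symm_apply]
  have h_perp (n : ℕ) : inner 𝕜 (e (n + 1)) (V (e 0)) = 0 := by
    rw [← hT, ← V.apply_symm_apply (T (e n)), V.inner_map_map, hV_symm, inner_eq_zero_symm]
    exact e.inner_zero_apply_eq_zero_of_shift hT _
  set c := inner 𝕜 (e 0) (V (e 0))
  have hc : V (e 0) = c • e 0 := e.eq_inner_smul_zero_of_inner_succ h_perp
  have hVe (n : ℕ) : V (e n) = c • e n := by
    induction n with
    | zero => exact hc
    | succ n ih => rw [← hT, hV, ih, map_smul]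
  refine ⟨c, ?_, fun x => ?_⟩
  · simpa [e.orthonormal.1 0, norm_smul] using (congrArg norm hc).symm
  · suffices (V : E →L[𝕜] E) = c • ContinuousLinearMap.id 𝕜 E from congrArg (· x) this
    exact e.ext_continuousLinearMap fun n => by simpa using hVe n

end HilbertBasis

namespace IsConjugation

variable {E : Type*} [NormedAddCommGroup E] [InnerProductSpace ℂ E] {C : E → E}

lemma map_zero (hC : IsConjugation C) : C 0 = 0 := by
  simpa using hC.1 1 0 0

lemma map_add (hC : IsConjugation C) (x y : E) : C (x + y) = C x + C y := by
  simpa using hC.1 1 x y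

lemma map_smul (hC : IsConjugation C) (a : ℂ) (x : E) : C (a • x) = conj a • C x := by
  simpa [hC.map_zero] using hC.1 a x 0

def toLinearIsometryEquiv (hC : IsConjugation C) : E ≃ₗᵢ⋆[ℂ] E where
  toFun := C
  invFun := C
  map_add' := hC.map_add
  map_smul' := hC.map_smul
  left_inv := hC.2.1
  right_inv := hC.2.1
  norm_map' := hC.2.2

@[simp]
lemma coe_toLinearIsometryEquiv (hC : IsConjugation C) : ⇑hC.toLinearIsometryEquiv = C := rfl

lemma apply_comm_of_fixed_basis (hC : IsConjugation C) {ι : Type*} (e : HilbertBasis ι ℂ E)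
    (hCe : ∀ i, C (e i) = e i) (T : E →L[ℂ] E) (hT : ∀ i, C (T (e i)) = T (e i)) (x : E) :
    C (T x) = T (C x) := by
  let C' : E →SL[starRingEnd ℂ] E := hC.toLinearIsometryEquiv.toContinuousLinearEquiv
  suffices C'.comp T = T.comp C' from congrArg (· x) this
  exact e.ext_continuousLinearMap fun i => by simp [C', hT, hCe]

end IsConjugation

theorem conjugation_intertwines_shifts_iff_general
    {H : Type*} [NormedAddCommGroup H] [InnerProductSpace ℂ H]
    (e : HilbertBasis ℕ ℂ H) (J : H → H)
    (hJ : IsConjugation J) (hJe : ∀ n, J (e n) = e n)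
    (SH : H →L[ℂ] H) (hSH : ∀ n, SH (e n) = e (n + 1))
    (C : H → H) (hC : IsConjugation C)
    (f : HilbertBasis ℕ ℂ H)
    (S : H →L[ℂ] H) (hSf : ∀ n, S (f n) = f (n + 1))
    (U : H ≃ₗᵢ[ℂ] H) (hU : ∀ n, U (e n) = f n) :
    (∀ x, C (SH x) = S (C x)) ↔
      ∃ lam : ℂ, ‖lam‖ = 1 ∧ ∀ x, C x = lam • U (J x) := by
  have hJSH : ∀ x, J (SH x) = SH (J x) :=
    hJ.apply_comm_of_fixed_basis e hJe SH fun n => by rw [hSH, hJe]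
  have hSU (x : H) : S (U x) = U (SH x) := by
    suffices S.comp (U : H →L[ℂ] H) = (U : H →L[ℂ] H).comp SH from congrArg (· x) this
    exact e.ext_continuousLinearMap fun n => by simp [hU, hSf, hSH]
  constructor
  · intro h
    let V : H ≃ₗᵢ[ℂ] H := (hJ.toLinearIsometryEquiv.trans hC.toLinearIsometryEquiv).trans U.symm
    have hV (x : H) : V (SH x) = SH (V x) := by
      simp only [V, LinearIsometryEquiv.trans_apply, IsConjugation.coe_toLinearIsometryEquiv,
        hJSH, h, U.symm_apply_eq, ← hSU, U.apply_symm_apply]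
    obtain ⟨c, hc, hVc⟩ := e.exists_eq_smul_of_commute_shift hSH V hV
    refine ⟨c, hc, fun x => ?_⟩
    calc C x = U (V (J x)) := by simp [V, hJ.2.1]
      _ = c • U (J x) := by rw [hVc, map_smul]
  · rintro ⟨lam, -, hC_eq⟩ x
    rw [hC_eq, hC_eq, hJSH, ← hSU, map_smul]

/-- Let `H` be an infinite-dimensional complex separable Hilbert space with
fixed orthonormal basis `{e_n}`, canonical conjugation `J`, and canonical shift `S_H`
(`S_H e_n = e_{n+1}`).  Let `C` be a conjugation, `{f_n}` an orthonormal basis, `S` the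
unilateral shift corresponding to `{f_n}` (`S f_n = f_{n+1}`), and `U` the unitary with
`U e_n = f_n`.  Then `C ∘ S_H = S ∘ C` if and only if `C = λ · (U ∘ J)` for some unimodular
constant `λ`. -/
theorem conjugation_intertwines_shifts_iff
    {H : Type*} [NormedAddCommGroup H] [InnerProductSpace ℂ H] [CompleteSpace H]
    [TopologicalSpace.SeparableSpace H]
    (e : HilbertBasis ℕ ℂ H) (J : H → H)
    (hJ : IsConjugation J) (hJe : ∀ n, J (e n) = e n)
    (SH : H →L[ℂ] H) (hSH : ∀ n, SH (e n) = e (n + 1))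
    (C : H → H) (hC : IsConjugation C)
    (f : HilbertBasis ℕ ℂ H)
    (S : H →L[ℂ] H) (hSf : ∀ n, S (f n) = f (n + 1))
    (U : H ≃ₗᵢ[ℂ] H) (hU : ∀ n, U (e n) = f n) :
    (∀ x, C (SH x) = S (C x)) ↔
      ∃ lam : ℂ, ‖lam‖ = 1 ∧ ∀ x, C x = lam • U (J x) :=
  conjugation_intertwines_shifts_iff_general e J hJ hJe SH hSH C hC f S hSf U hU
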